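/- Every subset S ⊆ V is a uniqueness set for PW_ω(G) for every ω with 0 < ω < K_S, where K_S = min_{v ∈ S^c} w_S(v) and w_S(v) = Σ_{u∈S} W(u,v): if x, y ∈ PW_ω(G) agree on S, then x = y. -/
import Mathlib

open Finset Matrix

lemma aux_dp {N : ℕ} (A : Matrix (Fin N) (Fin N) ℝ) (v w : Fin N → ℝ) :
    (A *ᵥ v) ⬝ᵥ w = v ⬝ᵥ (Aᵀ *ᵥ w) := by
  rw [Matrix.dotProduct_mulVec, Matrix.vecMul_transpose]

/-- Führ–Pesenson: every `S ⊆ V` is a uniqueness set for `PW_ω(G)` for every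
`0 < ω < K_S`, where `K_S = min_{v ∈ Sᶜ} w_S(v)` and `w_S(v) = ∑_{u ∈ S} W(u,v)`. -/
theorem stmt_1 {N : ℕ} (hN : 2 ≤ N)
    (W : Matrix (Fin N) (Fin N) ℝ)
    (hWsymm : W.IsSymm)
    (hWnonneg : ∀ u v, 0 ≤ W u v)
    (hWdiag : ∀ u, W u u = 0)
    (L : Matrix (Fin N) (Fin N) ℝ)
    (hL : L = Matrix.diagonal (fun u => ∑ v, W u v) - W)
    (μ : Fin N → ℝ) (U : Matrix (Fin N) (Fin N) ℝ)
    (hU : Uᵀ * U = 1)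
    (hμmono : Monotone μ)
    (hμ0 : μ (⟨0, by omega⟩ : Fin N) = 0)
    (heig : ∀ ℓ, L.mulVec (fun i => U i ℓ) = μ ℓ • (fun i => U i ℓ))
    (S : Finset (Fin N)) (hSc : Sᶜ.Nonempty)
    (ω : ℝ) (hω0 : 0 < ω)
    (hωK : ω < Sᶜ.inf' hSc (fun v => ∑ u ∈ S, W u v))
    (x y : Fin N → ℝ)
    (hx : x ∈ Submodule.span ℝ {u : Fin N → ℝ | ∃ ℓ, μ ℓ ≤ ω ∧ u = fun i => U i ℓ})
    (hy : y ∈ Submodule.span ℝ {u : Fin N → ℝ | ∃ ℓ, μ ℓ ≤ ω ∧ u = fun i => U i ℓ})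
    (hagree : ∀ v ∈ S, x v = y v) :
    x = y := by
  set z : Fin N → ℝ := x - y with hzdef
  have hzS : ∀ v ∈ S, z v = 0 := by
    intro v hv
    simp [hzdef, hagree v hv]
  have hzmem : z ∈ Submodule.span ℝ {u : Fin N → ℝ | ∃ ℓ, μ ℓ ≤ ω ∧ u = fun i => U i ℓ} :=
    Submodule.sub_mem _ hx hy
  obtain ⟨c, hcdef⟩ : ∃ c : Fin N → ℝ, c = Uᵀ *ᵥ z := ⟨_, rfl⟩
  have hUU' : U * Uᵀ = 1 := mul_eq_one_comm.mp hU
  have hzc : U *ᵥ c = z := by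
    rw [hcdef, Matrix.mulVec_mulVec, hUU', Matrix.one_mulVec]
  -- coefficients vanish above ω
  have hc0 : ∀ ℓ, ω < μ ℓ → c ℓ = 0 := by
    have key : ∀ w ∈ Submodule.span ℝ {u : Fin N → ℝ | ∃ ℓ, μ ℓ ≤ ω ∧ u = fun i => U i ℓ},
        ∀ ℓ, ω < μ ℓ → (Uᵀ *ᵥ w) ℓ = 0 := by
      intro w hw
      induction hw using Submodule.span_induction with
      | mem u hu =>
        obtain ⟨ℓ', hℓ', rfl⟩ := hu
        intro ℓ hℓ
        have hne : ℓ ≠ ℓ' := by intro h; subst h; linarith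
        have h1 : (Uᵀ *ᵥ fun i => U i ℓ') ℓ = (Uᵀ * U) ℓ ℓ' := by
          simp [Matrix.mulVec, Matrix.mul_apply, dotProduct]
        rw [h1, hU, Matrix.one_apply_ne hne]
      | zero => intro ℓ _; simp
      | add a b _ _ ha hb =>
        intro ℓ hℓ
        rw [Matrix.mulVec_add]
        simp [ha ℓ hℓ, hb ℓ hℓ]
      | smul r a _ ha =>
        intro ℓ hℓ
        rw [Matrix.mulVec_smul]
        simp [ha ℓ hℓ]
    rw [hcdef]
    exact key z hzmem
  -- L * U = U * diagonal μ
  have hLU : L * U = U * Matrix.diagonal μ := by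
    ext i ℓ
    have h := congrFun (heig ℓ) i
    simp only [Matrix.mulVec, dotProduct, Pi.smul_apply, smul_eq_mul] at h
    rw [Matrix.mul_apply, Matrix.mul_diagonal]
    simpa [mul_comm] using h
  have hULU : Uᵀ * L * U = Matrix.diagonal μ := by
    rw [Matrix.mul_assoc, hLU, ← Matrix.mul_assoc, hU, Matrix.one_mul]
  -- quadratic form equals ∑ μ ℓ * c ℓ ^ 2
  have hQspec : z ⬝ᵥ (L *ᵥ z) = ∑ ℓ, μ ℓ * c ℓ ^ 2 := by
    conv_lhs => rw [← hzc]
    rw [Matrix.mulVec_mulVec, aux_dp, Matrix.mulVec_mulVec, ← Matrix.mul_assoc, hULU]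
    simp only [dotProduct, Matrix.mulVec_diagonal]
    exact Finset.sum_congr rfl fun ℓ _ => by ring
  -- norm identity
  have hnorm : z ⬝ᵥ z = ∑ ℓ, c ℓ ^ 2 := by
    conv_lhs => rw [← hzc]
    rw [aux_dp, Matrix.mulVec_mulVec, hU, Matrix.one_mulVec]
    simp [dotProduct, sq]
  -- upper bound
  have hupper : z ⬝ᵥ (L *ᵥ z) ≤ ω * (z ⬝ᵥ z) := by
    rw [hQspec, hnorm, Finset.mul_sum]
    apply Finset.sum_le_sum
    intro ℓ _
    rcases le_or_gt (μ ℓ) ω with h | h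
    · exact mul_le_mul_of_nonneg_right h (sq_nonneg _)
    · rw [hc0 ℓ h]; simp
  -- symmetry consequence
  have hA' : ∑ i, ∑ j, W i j * z j ^ 2 = ∑ i, ∑ j, W i j * z i ^ 2 := by
    rw [Finset.sum_comm]
    exact Finset.sum_congr rfl fun i _ => Finset.sum_congr rfl fun j _ => by
      rw [hWsymm.apply]
  -- expansion of the quadratic form
  have hlhs : z ⬝ᵥ (L *ᵥ z)
      = (∑ i, ∑ j, W i j * z i ^ 2) - ∑ i, ∑ j, W i j * (z i * z j) := by
    rw [hL, Matrix.sub_mulVec]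
    simp only [dotProduct, Pi.sub_apply]
    simp only [Matrix.mulVec_diagonal]
    simp only [Matrix.mulVec, dotProduct]
    rw [← Finset.sum_sub_distrib]
    refine Finset.sum_congr rfl fun i _ => ?_
    simp only [mul_sub, Finset.mul_sum, Finset.sum_mul]
    congr 1 <;> exact Finset.sum_congr rfl fun j _ => by ring
  have hQexp : 2 * (z ⬝ᵥ (L *ᵥ z)) = ∑ i, ∑ j, W i j * (z i - z j) ^ 2 := by
    have expand : ∑ i, ∑ j, W i j * (z i - z j) ^ 2
        = (∑ i, ∑ j, W i j * z i ^ 2) - 2 * (∑ i, ∑ j, W i j * (z i * z j))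
          + (∑ i, ∑ j, W i j * z j ^ 2) := by
      rw [Finset.mul_sum, ← Finset.sum_sub_distrib, ← Finset.sum_add_distrib]
      refine Finset.sum_congr rfl fun i _ => ?_
      rw [Finset.mul_sum, ← Finset.sum_sub_distrib, ← Finset.sum_add_distrib]
      exact Finset.sum_congr rfl fun j _ => by ring
    rw [expand, hA', hlhs]; ring
  -- lower bound
  have hterm : ∀ i j : Fin N, 0 ≤ W i j * (z i - z j) ^ 2 :=
    fun i j => mul_nonneg (hWnonneg i j) (sq_nonneg _)
  have hpart1 : ∑ v ∈ Sᶜ, (∑ u ∈ S, W u v) * z v ^ 2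
      ≤ ∑ i ∈ S, ∑ j, W i j * (z i - z j) ^ 2 := by
    have h1 : ∑ i ∈ S, ∑ j ∈ Sᶜ, W i j * (z i - z j) ^ 2
        ≤ ∑ i ∈ S, ∑ j, W i j * (z i - z j) ^ 2 :=
      Finset.sum_le_sum fun i _ =>
        Finset.sum_le_sum_of_subset_of_nonneg (Finset.subset_univ _)
          (fun j _ _ => hterm i j)
    refine le_trans (le_of_eq ?_) h1
    rw [Finset.sum_comm]
    refine Finset.sum_congr rfl fun v hv => ?_
    rw [Finset.sum_mul]
    exact Finset.sum_congr rfl fun u hu => by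
      rw [hzS u hu]; ring
  have hpart2 : ∑ v ∈ Sᶜ, (∑ u ∈ S, W u v) * z v ^ 2
      ≤ ∑ i ∈ Sᶜ, ∑ j, W i j * (z i - z j) ^ 2 := by
    have h1 : ∑ i ∈ Sᶜ, ∑ j ∈ S, W i j * (z i - z j) ^ 2
        ≤ ∑ i ∈ Sᶜ, ∑ j, W i j * (z i - z j) ^ 2 :=
      Finset.sum_le_sum fun i _ =>
        Finset.sum_le_sum_of_subset_of_nonneg (Finset.subset_univ _)
          (fun j _ _ => hterm i j)
    refine le_trans (le_of_eq ?_) h1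
    refine Finset.sum_congr rfl fun v hv => ?_
    rw [Finset.sum_mul]
    exact Finset.sum_congr rfl fun u hu => by
      rw [hzS u hu, hWsymm.apply]; ring
  have hlow : ∑ v ∈ Sᶜ, (∑ u ∈ S, W u v) * z v ^ 2 ≤ z ⬝ᵥ (L *ᵥ z) := by
    have := add_le_add hpart1 hpart2
    rw [Finset.sum_add_sum_compl S (fun i => ∑ j, W i j * (z i - z j) ^ 2)] at this
    rw [← hQexp] at this
    linarith
  -- K_S lower bound on weighted sums
  set K : ℝ := Sᶜ.inf' hSc (fun v => ∑ u ∈ S, W u v) with hKdef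
  set A : ℝ := ∑ v ∈ Sᶜ, z v ^ 2 with hAdef
  have hKA : K * A ≤ ∑ v ∈ Sᶜ, (∑ u ∈ S, W u v) * z v ^ 2 := by
    rw [hAdef, Finset.mul_sum]
    exact Finset.sum_le_sum fun v hv =>
      mul_le_mul_of_nonneg_right (Finset.inf'_le _ hv) (sq_nonneg _)
  -- z ⬝ᵥ z = A
  have hzz : z ⬝ᵥ z = A := by
    rw [hAdef]
    simp only [dotProduct]
    rw [← Finset.sum_add_sum_compl S (fun v => z v * z v)]
    rw [Finset.sum_eq_zero (fun v hv => by rw [hzS v hv]; ring)]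
    rw [zero_add]
    exact Finset.sum_congr rfl fun v _ => (sq (z v)).symm
  have hA0 : (0:ℝ) ≤ A := Finset.sum_nonneg fun v _ => sq_nonneg _
  have hAzero : A = 0 := by
    have h1 : K * A ≤ ω * A := by
      have h2 := le_trans hKA (le_trans hlow hupper)
      rwa [hzz] at h2
    nlinarith [hωK]
  have hzSc : ∀ v ∈ Sᶜ, z v = 0 := by
    intro v hv
    have := (Finset.sum_eq_zero_iff_of_nonneg (fun v _ => sq_nonneg (z v))).mp hAzero v hv
    exact pow_eq_zero_iff (two_ne_zero) |>.mp this
  have hz0 : z = 0 := by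
    funext v
    by_cases hv : v ∈ S
    · exact hzS v hv
    · exact hzSc v (Finset.mem_compl.mpr hv)
  have : x - y = 0 := hz0
  exact sub_eq_zero.mp this
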